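/- Let Γ be a finite set of nonnegative integers containing 0, with E := #(Γ ∩ 2ℤ) and O := #(Γ ∩ (2ℤ+1)), and assume O < E. Then there exist real numbers α_1, ..., α_O such that f(x) = sin(πx) + Σ_{k=1}^{O} α_k sin((2k+1)πx) satisfies f^{(γ)}(n) = 0 for every γ ∈ Γ and every integer n. -/

import Mathlib

/-!
At an integer `n`, the `γ`-th derivative of `∑ β_k sin(m_k π x)` with all `m_k` odd equals
`(∑ β_k m_k ^ γ) π ^ γ sin(π n + γ π / 2)`. For even `γ` the sine factor vanishes, so only the odd
`γ ∈ Γ` impose conditions, namely `1 + ∑ α_k (2k + 3) ^ γ = 0`: `O` linear equations in the `O`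
unknowns `α_k`. Their matrix is a generalized Vandermonde matrix with distinct positive nodes, which
is invertible by Descartes' rule of signs: a nonzero polynomial with at most `O` monomials has fewer
than `O` positive roots.
-/

open Real

namespace Polynomial

variable {R : Type*}

theorem signVariations_lt_card_support [Semiring R] [LinearOrder R] {P : R[X]} (hP : P ≠ 0) :
    signVariations P < P.support.card := by
  induction h : P.support.card using Nat.strong_induction_on generalizing P with
  | _ k ih =>
    by_cases hP' : P.eraseLead = 0
    · have hmono : P = monomial P.natDegree P.leadingCoeff := by
        simpa [hP'] using (eraseLead_add_monomial_natDegree_leadingCoeff P).symm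
      rw [hmono, signVariations_monomial]
      exact h ▸ Finset.card_pos.2 (support_nonempty.2 hP)
    · have hlt := h ▸ eraseLead_support_card_lt hP
      have ih' := ih _ hlt hP' rfl
      have hcard := card_support_eraseLead_add_one hP
      have hsign := signVariations_le_eraseLead_succ P
      omega

theorem card_lt_card_support_of_forall_pos_isRoot [CommRing R] [LinearOrder R]
    [IsStrictOrderedRing R] {P : R[X]} (hP : P ≠ 0) {s : Finset R}
    (hs : ∀ x ∈ s, 0 < x ∧ P.IsRoot x) : s.card < P.support.card := by
  have hsub : s.val ≤ P.roots.filter (0 < ·) :=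
    (Multiset.le_iff_subset s.nodup).2 fun x hx =>
      Multiset.mem_filter.2 ⟨(mem_roots hP).2 (hs x hx).2, (hs x hx).1⟩
  calc s.card ≤ P.roots.countP (0 < ·) := by
        rw [Multiset.countP_eq_card_filter]; exact Multiset.card_le_card hsub
    _ ≤ signVariations P := roots_countP_pos_le_signVariations P
    _ < P.support.card := signVariations_lt_card_support hP

end Polynomial

namespace Matrix

open Polynomial

variable {ι K : Type*}

def generalizedVandermonde [Monoid K] (x : ι → K) (e : ι → ℕ) : Matrix ι ι K :=
  of fun i j => x i ^ e j

theorem det_generalizedVandermonde_ne_zero [Field K] [LinearOrder K] [IsStrictOrderedRing K]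
    [Fintype ι] [DecidableEq ι] {x : ι → K} (hx : Function.Injective x) (hpos : ∀ i, 0 < x i)
    {e : ι → ℕ} (he : Function.Injective e) : (generalizedVandermonde x e).det ≠ 0 := by
  intro hdet
  obtain ⟨v, hv0, hv⟩ := exists_mulVec_eq_zero_iff.2 hdet
  set p : K[X] := ∑ j, monomial (e j) (v j)
  have hcoeff (n : ℕ) : p.coeff n = ∑ j, if e j = n then v j else 0 := by
    simp only [p, finsetSum_coeff, coeff_monomial]
  have hp : p ≠ 0 := by
    obtain ⟨j, hj⟩ := Function.ne_iff.1 hv0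
    refine fun h => hj ?_
    simpa [Finset.sum_ite_eq', he.eq_iff, h] using (hcoeff (e j)).symm
  have hsupp : p.support ⊆ Finset.univ.image e := by
    intro n hn
    by_contra hne
    refine mem_support_iff.1 hn ((hcoeff n).trans (Finset.sum_eq_zero fun j _ => if_neg ?_))
    exact fun h => hne (Finset.mem_image.2 ⟨j, Finset.mem_univ _, h⟩)
  have hroots : ∀ y ∈ Finset.univ.image x, 0 < y ∧ p.IsRoot y := by
    simp only [Finset.mem_image, Finset.mem_univ, true_and, forall_exists_index,
      forall_apply_eq_imp_iff]
    refine fun i => ⟨hpos i, ?_⟩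
    simpa [p, eval_finsetSum, mulVec, dotProduct, generalizedVandermonde, mul_comm]
      using congrFun hv i
  have hlt := card_lt_card_support_of_forall_pos_isRoot hp hroots
  have hle := Finset.card_le_card hsupp
  rw [Finset.card_image_of_injective _ hx] at hlt
  rw [Finset.card_image_of_injective _ he] at hle
  omega

theorem exists_sum_mul_pow_eq [Field K] [LinearOrder K] [IsStrictOrderedRing K]
    [Fintype ι] [DecidableEq ι] {x : ι → K} (hx : Function.Injective x) (hpos : ∀ i, 0 < x i)
    {e : ι → ℕ} (he : Function.Injective e) (b : ι → K) :
    ∃ α : ι → K, ∀ j, ∑ k, α k * x k ^ e j = b j := by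
  have hunit := (isUnit_iff_isUnit_det _).2 (det_generalizedVandermonde_ne_zero hx hpos he).isUnit
  obtain ⟨α, hα⟩ := vecMul_surjective_iff_isUnit.2 hunit b
  exact ⟨α, fun j => congrFun hα j⟩

end Matrix

theorem Real.iteratedDeriv_sin_apply (n : ℕ) (x : ℝ) :
    iteratedDeriv n sin x = sin (x + n * (π / 2)) := by
  induction n generalizing x with
  | zero => simp
  | succ n ih =>
    rw [iteratedDeriv_succ, funext ih]
    have := ((hasDerivAt_id x).add_const (n * (π / 2))).sin.deriv
    simp only [id, mul_one] at this
    rw [this, Nat.cast_succ, add_mul, one_mul, ← add_assoc, sin_add_pi_div_two]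

theorem Real.sin_odd_mul_pi_mul_int_add {m : ℤ} (hm : Odd m) (n : ℤ) (θ : ℝ) :
    sin (m * π * n + θ) = sin (π * n + θ) := by
  obtain ⟨t, rfl⟩ := hm
  have : ((2 * t + 1 : ℤ) : ℝ) * π * n + θ = π * n + θ + ((t * n : ℤ) : ℝ) * (2 * π) := by
    push_cast; ring
  rw [this, sin_add_int_mul_two_pi]

theorem iteratedDeriv_sum_sin_odd_mul_pi {ι : Type*} (s : Finset ι) (b : ι → ℝ) {m : ι → ℤ}
    (hm : ∀ i ∈ s, Odd (m i)) (γ : ℕ) (n : ℤ) :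
    iteratedDeriv γ (fun x => ∑ i ∈ s, b i * sin (m i * π * x)) n
      = (∑ i ∈ s, b i * m i ^ γ) * π ^ γ * sin (π * n + γ * (π / 2)) := by
  rw [iteratedDeriv_fun_sum fun i _ => by fun_prop, Finset.sum_mul, Finset.sum_mul]
  refine Finset.sum_congr rfl fun i hi => ?_
  rw [iteratedDeriv_const_mul_field, iteratedDeriv_comp_const_mul contDiff_sin]
  beta_reduce
  rw [iteratedDeriv_sin_apply, ← mul_assoc, sin_odd_mul_pi_mul_int_add (hm i hi)]
  ring

theorem stmt_16_general (Γ : Finset ℕ) (O : ℕ) (hO : (Γ.filter (fun m => Odd m)).card = O) :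
    ∃ α : Fin O → ℝ,
      ∀ γ ∈ Γ, ∀ n : ℤ,
        iteratedDeriv γ
          (fun x : ℝ => Real.sin (Real.pi * x) +
            ∑ k : Fin O, α k * Real.sin ((2 * ((k : ℕ) + 1) + 1) * Real.pi * x))
          (n : ℝ) = 0 := by
  set e := (Γ.filter (fun m => Odd m)).orderEmbOfFin hO
  have hx : Function.Injective fun k : Fin O => (2 * ((k : ℕ) + 1) + 1 : ℝ) :=
    fun k l h => by simpa [Fin.val_inj] using h
  obtain ⟨α, hα⟩ := Matrix.exists_sum_mul_pow_eq hx (fun k => by positivity) e.injective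
    (fun _ => -1)
  refine ⟨α, fun γ hγ n => ?_⟩
  have hf : (fun y : ℝ => sin (π * y) + ∑ k : Fin O, α k * sin ((2 * ((k : ℕ) + 1) + 1) * π * y))
      = fun y => ∑ i : Fin (O + 1), (Fin.cons 1 α : Fin (O + 1) → ℝ) i
          * sin ((2 * ((i : ℕ) : ℤ) + 1 : ℤ) * π * y) := by
    funext y
    simp [Fin.sum_univ_succ]
  rw [hf, iteratedDeriv_sum_sin_odd_mul_pi _ _ (fun i _ => odd_two_mul_add_one _) γ n]
  rcases Nat.even_or_odd' γ with ⟨a, rfl | rfl⟩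
  · have : π * n + ((2 * a : ℕ) : ℝ) * (π / 2) = ((n + a : ℤ) : ℝ) * π := by push_cast; ring
    rw [this, sin_int_mul_pi, mul_zero]
  · obtain ⟨j, hj⟩ : ∃ j, e j = 2 * a + 1 := by
      simpa [e, ← Set.mem_range, Finset.range_orderEmbOfFin] using hγ
    have hcoeff : ∑ i : Fin (O + 1), (Fin.cons 1 α : Fin (O + 1) → ℝ) i
        * ((2 * ((i : ℕ) : ℤ) + 1 : ℤ) : ℝ) ^ (2 * a + 1) = 0 := by
      simp [Fin.sum_univ_succ, ← hj, hα j]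
    rw [hcoeff, zero_mul, zero_mul]

theorem stmt_16 (Γ : Finset ℕ) (h0 : 0 ∈ Γ)
    (E O : ℕ) (hE : (Γ.filter (fun m => Even m)).card = E)
    (hO : (Γ.filter (fun m => Odd m)).card = O) (hOE : O < E) :
    ∃ α : Fin O → ℝ,
      ∀ γ ∈ Γ, ∀ n : ℤ,
        iteratedDeriv γ
          (fun x : ℝ => Real.sin (Real.pi * x) +
            ∑ k : Fin O, α k * Real.sin ((2 * ((k : ℕ) + 1) + 1) * Real.pi * x))
          (n : ℝ) = 0 :=
  stmt_16_general Γ O hO
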